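/- If 1 → H → G → E → 1 is a short exact sequence of groups and both H and E satisfy the Bergman property, then G satisfies the Bergman property. -/

import Mathlib

/-!
Take a symmetric generating set `S ∋ 1` of `G`. Its image generates `E`, so `ψ '' S ^ n = E` for
some `n`. Choosing coset representatives in `S ^ n` (with `1` representing the trivial coset),
Schreier's lemma shows that `ker ψ = φ.range` is generated by its elements in `S ^ (2n+1)`; their
preimages generate `H`, so the Bergman property of `H` gives `ker ψ ⊆ S ^ ((2n+1)m)`, and then
`G = ker ψ * S ^ n = S ^ ((2n+1)m + n)`.
-/

/-- A group has the Bergman property if for every generating set `U` there is `n`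
such that every element is a product of at most `n` elements of `U ∪ U⁻¹`. -/
def BergmanProperty (G : Type*) [Group G] : Prop :=
  ∀ U : Set G, Subgroup.closure U = ⊤ →
    ∃ n : ℕ, ∀ g : G, ∃ l : List G,
      l.length ≤ n ∧ (∀ x ∈ l, x ∈ U ∪ U⁻¹) ∧ l.prod = g

open Set Pointwise

theorem Set.mem_insert_one_pow_iff {M : Type*} [Monoid M] {S : Set M} {n : ℕ} {g : M} :
    g ∈ insert 1 S ^ n ↔ ∃ l : List M, l.length ≤ n ∧ (∀ x ∈ l, x ∈ S) ∧ l.prod = g := by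
  induction n generalizing g with
  | zero => simp [eq_comm]
  | succ n ih =>
    rw [pow_succ', mem_mul]
    constructor
    · rintro ⟨a, ha, b, hb, rfl⟩
      obtain ⟨l, hl, hlS, rfl⟩ := ih.1 hb
      rcases ha with rfl | ha
      · exact ⟨l, by omega, hlS, (one_mul _).symm⟩
      · exact ⟨a :: l, by simpa, List.forall_mem_cons.2 ⟨ha, hlS⟩, List.prod_cons⟩
    · rintro ⟨_ | ⟨a, l⟩, hl, hlS, rfl⟩
      · exact ⟨1, mem_insert _ _, 1, ih.2 ⟨[], by simp, by simp, rfl⟩, mul_one 1⟩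
      · obtain ⟨ha, hlS⟩ := List.forall_mem_cons.1 hlS
        exact ⟨a, mem_insert_of_mem _ ha, l.prod, ih.2 ⟨l, by simpa using hl, hlS, rfl⟩, rfl⟩

theorem bergmanProperty_iff {G : Type*} [Group G] :
    BergmanProperty G ↔ ∀ S : Set G, 1 ∈ S → S⁻¹ = S → Subgroup.closure S = ⊤ →
      ∃ n : ℕ, S ^ n = univ := by
  constructor
  · intro h S hS1 hSinv hS
    obtain ⟨n, hn⟩ := h S hS
    refine ⟨n, eq_univ_of_forall fun g => ?_⟩
    rw [← insert_eq_of_mem hS1, mem_insert_one_pow_iff]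
    simpa only [hSinv, union_self] using hn g
  · intro h U hU
    obtain ⟨n, hn⟩ := h (insert 1 (U ∪ U⁻¹)) (mem_insert _ _)
      (by rw [inv_insert, inv_one, union_inv, inv_inv, union_comm])
      (by rw [Subgroup.closure_insert_one, Subgroup.closure_union, Subgroup.closure_inv, sup_idem,
        hU])
    exact ⟨n, fun g => mem_insert_one_pow_iff.1 (hn ▸ mem_univ g)⟩

theorem MonoidHom.isComplement_ker_range {G E : Type*} [Group G] [Group E] (ψ : G →* E)
    {s : E → G} (hs : Function.RightInverse s ψ) : Subgroup.IsComplement ψ.ker (Set.range s) := by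
  refine Subgroup.isComplement_iff_existsUnique_mul_inv_mem.2 fun g =>
    ⟨⟨s (ψ g), mem_range_self _⟩, ?_, ?_⟩
  · simp [hs (ψ g)]
  · rintro ⟨_, e, rfl⟩ h
    have he : ψ g = e := by simpa [hs e, mul_inv_eq_one] using h
    simp [he]

theorem Subgroup.IsComplement.closure_inter_mul_mul_inv {G : Type*} [Group G] {H : Subgroup G}
    {R S : Set G} (hR : IsComplement H R) (hR1 : (1 : G) ∈ R) (hS : closure S = ⊤) :
    closure ((H : Set G) ∩ (R * S * R⁻¹)) = H := by
  refine le_antisymm ((closure_le _).2 inter_subset_left)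
    ((closure_mul_image_eq hR hR1 hS).ge.trans (closure_mono ?_))
  rintro - ⟨g, hg, rfl⟩
  exact ⟨hR.mul_inv_toRightFun_mem g, mul_mem_mul hg (inv_mem_inv.2 (hR.toRightFun g).2)⟩

theorem Subgroup.closure_preimage_of_injective {H G : Type*} [Group H] [Group G] {φ : H →* G}
    (hφ : Function.Injective φ) (T : Set G) :
    closure (φ ⁻¹' T) = (closure ((φ.range : Set G) ∩ T)).comap φ := by
  apply map_injective hφ
  have hT : (φ.range : Set G) ∩ T ⊆ φ.range := inter_subset_left
  rw [map_comap_eq, inf_eq_right.2 ((closure_le _).2 hT), MonoidHom.map_closure,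
    MonoidHom.coe_range, image_preimage_eq_range_inter]

theorem MonoidHom.closure_ker_inter_pow {G E : Type*} [Group G] [Group E] (ψ : G →* E)
    {S : Set G} (hS1 : 1 ∈ S) (hSinv : S⁻¹ = S) (hS : Subgroup.closure S = ⊤) {n : ℕ}
    (hn : ψ '' (S ^ n) = univ) :
    Subgroup.closure ((ψ.ker : Set G) ∩ S ^ (2 * n + 1)) = ψ.ker := by
  have hsec : ∀ e, ∃ t ∈ S ^ n, ψ t = e ∧ (e = 1 → t = 1) := fun e => by
    by_cases he : e = 1
    · exact ⟨1, one_mem_pow hS1, by rw [he, map_one], fun _ => rfl⟩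
    · obtain ⟨t, ht, rfl⟩ : e ∈ ψ '' (S ^ n) := hn ▸ mem_univ e
      exact ⟨t, ht, rfl, fun h => absurd h he⟩
  choose s hsS hs hs1 using hsec
  have hR := ψ.isComplement_ker_range hs
  have hsS' : Set.range s ⊆ S ^ n := range_subset_iff.2 hsS
  have hRS : Set.range s * S * (Set.range s)⁻¹ ⊆ S ^ (2 * n + 1) :=
    calc Set.range s * S * (Set.range s)⁻¹ ⊆ S ^ n * S * (S ^ n)⁻¹ :=
          mul_subset_mul (mul_subset_mul_right hsS') (inv_subset_inv.2 hsS')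
      _ = S ^ (2 * n + 1) := by
          rw [← inv_pow, hSinv, ← pow_succ, ← pow_add, two_mul, add_right_comm]
  exact le_antisymm ((Subgroup.closure_le _).2 inter_subset_left) <|
    (hR.closure_inter_mul_mul_inv ⟨1, hs1 1 rfl⟩ hS).ge.trans
      (Subgroup.closure_mono (inter_subset_inter_right _ hRS))

theorem MonoidHom.pow_add_eq_univ_of_ker_subset {G E : Type*} [Group G] [Group E] (ψ : G →* E)
    {S : Set G} {k n : ℕ} (hk : (ψ.ker : Set G) ⊆ S ^ k) (hn : ψ '' (S ^ n) = univ) :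
    S ^ (k + n) = univ :=
  eq_univ_of_forall fun g => by
    obtain ⟨t, ht, hψt⟩ : ψ g ∈ ψ '' (S ^ n) := hn ▸ mem_univ _
    rw [pow_add]
    exact ⟨g * t⁻¹, hk (by simp [hψt]), t, ht, inv_mul_cancel_right g t⟩

theorem stmt10 {H G E : Type*} [Group H] [Group G] [Group E]
    (φ : H →* G) (ψ : G →* E) (hφ : Function.Injective φ)
    (hψ : Function.Surjective ψ) (hexact : φ.range = ψ.ker)
    (hH : BergmanProperty H) (hE : BergmanProperty E) :
    BergmanProperty G := by
  rw [bergmanProperty_iff] at hH hE ⊢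
  intro S hS1 hSinv hS
  obtain ⟨n, hn⟩ := hE (ψ '' S) ⟨1, hS1, map_one ψ⟩ (by rw [← image_inv, hSinv])
    (by rw [← MonoidHom.map_closure, hS, Subgroup.map_top_of_surjective ψ hψ])
  rw [← image_pow] at hn
  have hSk : (S ^ (2 * n + 1))⁻¹ = S ^ (2 * n + 1) := by rw [← inv_pow, hSinv]
  set V := φ ⁻¹' (S ^ (2 * n + 1))
  have hV : Subgroup.closure V = ⊤ := by
    rw [Subgroup.closure_preimage_of_injective hφ, hexact,
      ψ.closure_ker_inter_pow hS1 hSinv hS hn, ← hexact, MonoidHom.comap_range_self]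
  obtain ⟨m, hm⟩ := hH V (by simpa [V] using one_mem_pow (n := 2 * n + 1) hS1)
    (by ext h; rw [mem_inv, mem_preimage, mem_preimage, map_inv, ← mem_inv, hSk])
    hV
  refine ⟨(2 * n + 1) * m + n, ψ.pow_add_eq_univ_of_ker_subset ?_ hn⟩
  rw [← hexact, MonoidHom.coe_range, ← image_univ, ← hm, image_pow, pow_mul]
  exact pow_subset_pow_left (image_preimage_subset _ _)
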